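/- For any polar code of block length N = 2^n with n ≥ 3 (i.e., length 8 or more), the girth of its Tanner graph (obtained from the normal realization of the encoding graph by adding check nodes) is at least 12. -/

import Mathlib

abbrev PVar (n : ℕ) := Fin (n + 1) × Fin (2 ^ n)

/-- Check nodes: one per encoding equation of each stage. -/
abbrev PChk (n : ℕ) := Fin n × Fin (2 ^ n)

/-- The butterfly partner of index `j` at stage `t` (flip bit `t`). -/
def xorIdx {n : ℕ} (t : Fin n) (j : Fin (2 ^ n)) : Fin (2 ^ n) :=
  ⟨(j : ℕ) ^^^ 2 ^ (t : ℕ),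
    Nat.xor_lt_two_pow j.isLt (Nat.pow_lt_pow_right one_lt_two t.isLt)⟩

/-- Adjacency between a variable node `p` and the check node `c = (t, j)`,
encoding the stage-`t` butterfly equation
`v_{t+1}(j) = v_t(j) + v_t(j ⊕ 2^t)` when bit `t` of `j` is `0` (degree-3
check), and `v_{t+1}(j) = v_t(j)` otherwise (degree-2 check). -/
def varCheckAdj (n : ℕ) (p : PVar n) (c : PChk n) : Prop :=
  p = (c.1.castSucc, c.2) ∨ p = (c.1.succ, c.2) ∨
    ((c.2 : ℕ).testBit (c.1 : ℕ) = false ∧ p = (c.1.castSucc, xorIdx c.1 c.2))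

/-- The Tanner graph of the polar code of length `2^n`, obtained from the
normal realization of the encoding graph by adding check nodes. -/
def tanner (n : ℕ) : SimpleGraph (PVar n ⊕ PChk n) where
  Adj a b :=
    match a, b with
    | Sum.inl p, Sum.inr c => varCheckAdj n p c
    | Sum.inr c, Sum.inl p => varCheckAdj n p c
    | _, _ => False
  symm := by
    constructor
    intro a b h
    cases a <;> cases b <;> simp_all
  loopless := by
    constructor
    intro a
    cases a <;> simp

/-!
The Tanner graph is bipartite, so a cycle has exactly twice as many edges as check nodes, and it
suffices to find six checks on every cycle. Let `T` be the largest stage of a check on the cycle.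
A variable of stage `T + 1` has only one check of stage `≤ T`, so it cannot lie on the cycle;
hence both cycle neighbours of a stage-`T` check `(T, j)` are stage-`T` variables, so bit `T` of
`j` is clear and the cross edge to `(T, j ⊕ 2^T)` lies on the cycle. Bit `T` of the index flips
exactly along such cross edges, so a closed trail crosses them an even number of times: there are
at least two stage-`T` checks.
A stage-`T` variable `(T, j)` has only one stage-`T` check whose index has bit `T` clear, so its
second cycle neighbour is the check `(T - 1, j)`. The two stage-`T` checks thus bring four
distinct stage-`(T - 1)` checks along, six in all.

Since `girth` is `0` for an acyclic graph, we also need a cycle: the length-`4` code already has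
one of length `12`, and it embeds in every longer code.
-/

open Finset

namespace SimpleGraph.Walk

variable {V : Type*} {G : SimpleGraph V}

lemma IsCycle.exists_ne_mem_edges {a v : V} {w : G.Walk a a} (hw : w.IsCycle)
    (hv : v ∈ w.support) : ∃ x y, x ≠ y ∧ s(v, x) ∈ w.edges ∧ s(v, y) ∈ w.edges := by
  obtain ⟨x, y, hxy, hset⟩ := Set.ncard_eq_two.mp (hw.ncard_neighborSet_toSubgraph_eq_two hv)
  have hx : x ∈ w.toSubgraph.neighborSet v := hset ▸ Set.mem_insert x {y}
  have hy : y ∈ w.toSubgraph.neighborSet v := hset ▸ Set.mem_insert_of_mem x rfl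
  exact ⟨x, y, hxy, adj_toSubgraph_iff_mem_edges.mp hx, adj_toSubgraph_iff_mem_edges.mp hy⟩

lemma even_countP_darts_ne_iff (f : V → Bool) {u v : V} (p : G.Walk u v) :
    Even (p.darts.countP fun d => f d.fst != f d.snd) ↔ f u = f v := by
  induction p with
  | nil => simp
  | @cons u u' v h q ih =>
    rw [darts_cons, List.countP_cons]
    cases hu : f u <;> cases hu' : f u' <;> simp_all [Nat.even_add_one]

lemma IsTrail.exists_mem_edges_ne_of_ne (f : V → Bool) {a x y : V} {w : G.Walk a a}
    (hw : w.IsTrail) (he : s(x, y) ∈ w.edges) (hf : f x ≠ f y) :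
    ∃ x' y', s(x', y') ∈ w.edges ∧ f x' ≠ f y' ∧ s(x', y') ≠ s(x, y) := by
  classical
  by_contra! h
  set crossing : G.Dart → Bool := fun d => f d.fst != f d.snd
  have hle : w.darts.countP crossing ≤ w.edges.count s(x, y) := by
    rw [edges, List.count, List.countP_map]
    exact List.countP_mono_left fun d hd hd' =>
      beq_iff_eq.mpr (h d.fst d.snd (List.mem_map_of_mem hd) (by simpa [crossing] using hd'))
  have hpos : 0 < w.darts.countP crossing := by
    obtain ⟨d, hd, hde⟩ := List.mem_map.mp he
    refine List.countP_pos_iff.mpr ⟨d, hd, ?_⟩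
    rcases Sym2.eq_iff.mp hde with ⟨h₁, h₂⟩ | ⟨h₁, h₂⟩ <;> simp [crossing, h₁, h₂, hf, Ne.symm hf]
  have heven : Even (w.darts.countP crossing) := (even_countP_darts_ne_iff f w).mpr rfl
  have hone := List.nodup_iff_count_le_one.mp hw.edges_nodup s(x, y)
  rw [Nat.even_iff] at heven
  omega

lemma two_mul_countP_support_tail_add (f : V → Bool) (hf : ∀ x y, G.Adj x y → f x ≠ f y)
    {u v : V} (p : G.Walk u v) :
    2 * p.support.tail.countP f + (f u).toNat = p.length + (f v).toNat := by
  induction p with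
  | nil => simp
  | @cons u u' v h q ih =>
    rw [support_cons, List.tail_cons, ← cons_tail_support, List.countP_cons, length_cons]
    have := hf _ _ h
    cases hu : f u <;> cases hu' : f u' <;> simp_all <;> omega

lemma IsCycle.two_mul_card_filter_support [DecidableEq V] (f : V → Bool)
    (hf : ∀ x y, G.Adj x y → f x ≠ f y) {a : V} {w : G.Walk a a} (hw : w.IsCycle) :
    2 * #{x ∈ w.support.toFinset | f x} = w.length := by
  have htail : w.support.toFinset = w.support.tail.toFinset := by
    rw [← cons_tail_support, List.toFinset_cons, List.tail_cons,
      Finset.insert_eq_of_mem (List.mem_toFinset.mpr (end_mem_tail_support hw.not_nil))]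
  rw [htail, ← List.toFinset_filter, List.toFinset_card_of_nodup (hw.support_nodup.filter _),
    ← List.countP_eq_length_filter]
  simpa using two_mul_countP_support_tail_add f hf w

end SimpleGraph.Walk

lemma Nat.eq_of_testBit_eq_false_of_eq_or_xor {a b j T : ℕ} (ha : a.testBit T = false)
    (hb : b.testBit T = false) (haj : a = j ∨ j = a ^^^ 2 ^ T) (hbj : b = j ∨ j = b ^^^ 2 ^ T) :
    a = b := by
  rcases haj with rfl | rfl <;> rcases hbj with hbj | hbj
  · exact hbj.symm
  · simp [hbj, Nat.testBit_xor, hb] at ha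
  · simp [hbj, Nat.testBit_xor, ha] at hb
  · exact Nat.xor_left_injective hbj

open SimpleGraph Walk Sum

section Tanner

variable {n : ℕ}

lemma varCheckAdj_iff {p : PVar n} {c : PChk n} :
    varCheckAdj n p c ↔ ((p.2 : ℕ) = c.2 ∧ ((p.1 : ℕ) = c.1 ∨ (p.1 : ℕ) = c.1 + 1)) ∨
      ((p.1 : ℕ) = c.1 ∧ (c.2 : ℕ).testBit c.1 = false ∧ (p.2 : ℕ) = c.2 ^^^ 2 ^ (c.1 : ℕ)) := by
  simp only [varCheckAdj, Prod.ext_iff, Fin.ext_iff, xorIdx, Fin.val_castSucc, Fin.val_succ]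
  tauto

lemma varCheckAdj.stage_eq_of_testBit_ne {p : PVar n} {c : PChk n} {T : ℕ}
    (h : varCheckAdj n p c) (hne : (p.2 : ℕ).testBit T ≠ (c.2 : ℕ).testBit T) :
    (c.1 : ℕ) = T ∧ p = (c.1.castSucc, xorIdx c.1 c.2) := by
  rcases h with rfl | rfl | ⟨-, rfl⟩
  · exact absurd rfl hne
  · exact absurd rfl hne
  · refine ⟨?_, rfl⟩
    by_contra hT
    simp [xorIdx, Nat.testBit_xor, hT] at hne

lemma tanner_adj_isRight_ne {x y : PVar n ⊕ PChk n} (h : (tanner n).Adj x y) :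
    x.isRight ≠ y.isRight := by
  rcases x with _ | _ <;> rcases y with _ | _ <;> simp_all [tanner]

variable {a : PVar n ⊕ PChk n} {w : (tanner n).Walk a a}

lemma exists_ne_checks_of_mem_support (hw : w.IsCycle) {p : PVar n} (hp : inl p ∈ w.support) :
    ∃ c₁ c₂, c₁ ≠ c₂ ∧ varCheckAdj n p c₁ ∧ varCheckAdj n p c₂ ∧
      s(inl p, inr c₁) ∈ w.edges ∧ s(inl p, inr c₂) ∈ w.edges := by
  obtain ⟨x, y, hxy, hx, hy⟩ := hw.exists_ne_mem_edges hp
  rcases x with _ | c₁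
  · exact (w.adj_of_mem_edges hx).elim
  rcases y with _ | c₂
  · exact (w.adj_of_mem_edges hy).elim
  exact ⟨c₁, c₂, fun h => hxy (h ▸ rfl), w.adj_of_mem_edges hx, w.adj_of_mem_edges hy, hx, hy⟩

lemma exists_ne_vars_of_mem_support (hw : w.IsCycle) {c : PChk n} (hc : inr c ∈ w.support) :
    ∃ p₁ p₂, p₁ ≠ p₂ ∧ varCheckAdj n p₁ c ∧ varCheckAdj n p₂ c ∧
      s(inr c, inl p₁) ∈ w.edges ∧ s(inr c, inl p₂) ∈ w.edges := by
  obtain ⟨x, y, hxy, hx, hy⟩ := hw.exists_ne_mem_edges hc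
  rcases x with p₁ | _
  · rcases y with p₂ | _
    · exact ⟨p₁, p₂, fun h => hxy (h ▸ rfl), w.adj_of_mem_edges hx, w.adj_of_mem_edges hy, hx, hy⟩
    · exact (w.adj_of_mem_edges hy).elim
  · exact (w.adj_of_mem_edges hx).elim

open Classical in
noncomputable def checksOn {u v : PVar n ⊕ PChk n} (p : (tanner n).Walk u v) : Finset (PChk n) :=
  {c | (inr c : PVar n ⊕ PChk n) ∈ p.support}

@[simp]
lemma mem_checksOn {u v : PVar n ⊕ PChk n} {p : (tanner n).Walk u v} {c : PChk n} :
    c ∈ checksOn p ↔ inr c ∈ p.support := by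
  simp [checksOn]

lemma two_mul_card_checksOn (hw : w.IsCycle) : 2 * #(checksOn w) = w.length := by
  rw [← hw.two_mul_card_filter_support Sum.isRight fun _ _ => tanner_adj_isRight_ne,
    ← card_map Function.Embedding.inr]
  congr 2
  ext x
  rcases x with _ | _ <;> simp

section TopStage

variable {T : ℕ}

lemma stage_ne_succ_of_mem_support (hw : w.IsCycle) (hT : ∀ c ∈ checksOn w, (c.1 : ℕ) ≤ T)
    {p : PVar n} (hp : inl p ∈ w.support) : (p.1 : ℕ) ≠ T + 1 := by
  intro hpT
  obtain ⟨c₁, c₂, hne, h₁, h₂, he₁, he₂⟩ := exists_ne_checks_of_mem_support hw hp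
  have key : ∀ c, varCheckAdj n p c → s(inl p, inr c) ∈ w.edges →
      (c.1 : ℕ) = T ∧ (c.2 : ℕ) = p.2 := by
    intro c hc he
    have := hT c (mem_checksOn.mpr (w.snd_mem_support_of_mem_edges he))
    rw [varCheckAdj_iff] at hc
    omega
  have := key c₁ h₁ he₁
  have := key c₂ h₂ he₂
  exact hne (by simp only [Prod.ext_iff, Fin.ext_iff]; omega)

lemma testBit_eq_false_and_mem_of_stage_eq (hw : w.IsCycle) (hT : ∀ c ∈ checksOn w, (c.1 : ℕ) ≤ T)
    {c : PChk n} (hc : inr c ∈ w.support) (hcT : (c.1 : ℕ) = T) :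
    (c.2 : ℕ).testBit T = false ∧ inl (c.1.castSucc, c.2) ∈ w.support ∧
      s(inr c, inl (c.1.castSucc, xorIdx c.1 c.2)) ∈ w.edges := by
  obtain ⟨p₁, p₂, hne, h₁, h₂, he₁, he₂⟩ := exists_ne_vars_of_mem_support hw hc
  have key : ∀ p, varCheckAdj n p c → s(inr c, inl p) ∈ w.edges → p = (c.1.castSucc, c.2) ∨
      ((c.2 : ℕ).testBit c.1 = false ∧ p = (c.1.castSucc, xorIdx c.1 c.2)) := by
    rintro p (h | h | h) he
    · exact Or.inl h
    · refine absurd ?_ (stage_ne_succ_of_mem_support hw hT (w.snd_mem_support_of_mem_edges he))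
      simp [h, hcT]
    · exact Or.inr h
  rcases key p₁ h₁ he₁ with rfl | ⟨hb, rfl⟩ <;> rcases key p₂ h₂ he₂ with rfl | ⟨hb', rfl⟩
  · exact absurd rfl hne
  · exact ⟨hcT ▸ hb', w.snd_mem_support_of_mem_edges he₁, he₂⟩
  · exact ⟨hcT ▸ hb, w.snd_mem_support_of_mem_edges he₂, he₁⟩
  · exact absurd rfl hne

lemma exists_mem_checksOn_stage_add_one_eq (hw : w.IsCycle)
    (hT : ∀ c ∈ checksOn w, (c.1 : ℕ) ≤ T) {p : PVar n} (hp : inl p ∈ w.support)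
    (hpT : (p.1 : ℕ) = T) : ∃ c ∈ checksOn w, (c.1 : ℕ) + 1 = T ∧ c.2 = p.2 := by
  by_contra! h
  obtain ⟨c₁, c₂, hne, h₁, h₂, he₁, he₂⟩ := exists_ne_checks_of_mem_support hw hp
  have key : ∀ c, varCheckAdj n p c → s(inl p, inr c) ∈ w.edges → (c.1 : ℕ) = T ∧
      (c.2 : ℕ).testBit T = false ∧ ((c.2 : ℕ) = p.2 ∨ (p.2 : ℕ) = c.2 ^^^ 2 ^ T) := by
    intro c hpc he
    have hc := w.snd_mem_support_of_mem_edges he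
    rw [varCheckAdj_iff] at hpc
    rcases hpc with ⟨h2, h1 | h1⟩ | ⟨h1, hb, h2⟩
    · have hcT : (c.1 : ℕ) = T := by omega
      exact ⟨hcT, (testBit_eq_false_and_mem_of_stage_eq hw hT hc hcT).1, Or.inl h2.symm⟩
    · exact absurd (Fin.ext h2.symm) (h c (mem_checksOn.mpr hc) (by omega))
    · have hcT : (c.1 : ℕ) = T := by omega
      exact ⟨hcT, hcT ▸ hb, Or.inr (hcT ▸ h2)⟩
  obtain ⟨hT₁, hb₁, hj₁⟩ := key c₁ h₁ he₁
  obtain ⟨hT₂, hb₂, hj₂⟩ := key c₂ h₂ he₂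
  exact hne (Prod.ext (Fin.ext (hT₁.trans hT₂.symm))
    (Fin.ext (Nat.eq_of_testBit_eq_false_of_eq_or_xor hb₁ hb₂ hj₁ hj₂)))

lemma exists_ne_mem_checksOn_stage_eq (hw : w.IsCycle) (hT : ∀ c ∈ checksOn w, (c.1 : ℕ) ≤ T)
    {c : PChk n} (hc : c ∈ checksOn w) (hcT : (c.1 : ℕ) = T) :
    ∃ c' ∈ checksOn w, c' ≠ c ∧ (c'.1 : ℕ) = T := by
  -- bit `T` of the index flips exactly along the cross edges of stage-`T` checks
  let bitT : PVar n ⊕ PChk n → Bool :=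
    Sum.elim (fun p => (p.2 : ℕ).testBit T) (fun c => (c.2 : ℕ).testBit T)
  obtain ⟨hb, -, he⟩ := testBit_eq_false_and_mem_of_stage_eq hw hT (mem_checksOn.mp hc) hcT
  have hcross : bitT (inr c) ≠ bitT (inl (c.1.castSucc, xorIdx c.1 c.2)) := by
    simp [bitT, xorIdx, Nat.testBit_xor, hcT, hb]
  obtain ⟨x, y, he', hxy, hne⟩ := hw.isTrail.exists_mem_edges_ne_of_ne bitT he hcross
  suffices key : ∀ p c', varCheckAdj n p c' → bitT (inl p) ≠ bitT (inr c') →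
      s(inl p, inr c') ∈ w.edges → s(inl p, inr c') ≠ s(inr c, inl (c.1.castSucc, xorIdx c.1 c.2)) →
      ∃ c' ∈ checksOn w, c' ≠ c ∧ (c'.1 : ℕ) = T by
    have hadj := w.adj_of_mem_edges he'
    rcases x with p | c' <;> rcases y with p' | c''
    · exact hadj.elim
    · exact key p c'' hadj hxy he' hne
    · exact key p' c' hadj hxy.symm (Sym2.eq_swap ▸ he') (Sym2.eq_swap ▸ hne)
    · exact hadj.elim
  intro p c' hpc' hbit he'' hne'
  obtain ⟨hc'T, rfl⟩ := hpc'.stage_eq_of_testBit_ne hbit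
  refine ⟨c', mem_checksOn.mpr (w.snd_mem_support_of_mem_edges he''), ?_, hc'T⟩
  rintro rfl
  exact hne' Sym2.eq_swap

lemma two_mul_card_stage_eq_le (hw : w.IsCycle) (hT : ∀ c ∈ checksOn w, (c.1 : ℕ) ≤ T)
    {t : Fin n} (ht : (t : ℕ) + 1 = T) :
    2 * #{c ∈ checksOn w | (c.1 : ℕ) = T} ≤ #{c ∈ checksOn w | c.1 = t} := by
  set top := {c ∈ checksOn w | (c.1 : ℕ) = T}
  set below := {c ∈ checksOn w | c.1 = t}
  have hbelow : ∀ p : PVar n, inl p ∈ w.support → (p.1 : ℕ) = T → (t, p.2) ∈ below := by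
    intro p hp hpT
    obtain ⟨c, hc, hcT, hcp⟩ := exists_mem_checksOn_stage_add_one_eq hw hT hp hpT
    have : c = (t, p.2) := Prod.ext (Fin.ext (show (c.1 : ℕ) = t by omega)) hcp
    exact mem_filter.mpr ⟨this ▸ hc, rfl⟩
  have hbits : ∀ c ∈ top, (c.2 : ℕ).testBit T = false ∧ (t, c.2) ∈ below ∧
      (t, xorIdx c.1 c.2) ∈ below := by
    intro c hc
    obtain ⟨hc, hcT⟩ := mem_filter.mp hc
    obtain ⟨hb, hp, he⟩ := testBit_eq_false_and_mem_of_stage_eq hw hT (mem_checksOn.mp hc) hcT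
    exact ⟨hb, hbelow _ hp hcT, hbelow _ (w.snd_mem_support_of_mem_edges he) hcT⟩
  have hinj : ∀ c ∈ top, ∀ c' ∈ top, c.2 = c'.2 → c = c' := fun c hc c' hc' h =>
    Prod.ext (Fin.ext ((mem_filter.mp hc).2.trans (mem_filter.mp hc').2.symm)) h
  calc 2 * #top
      = #(top.image fun c => (t, c.2)) + #(top.image fun c => (t, xorIdx c.1 c.2)) := by
        rw [card_image_of_injOn, card_image_of_injOn]
        · ring
        · intro c hc c' hc' h
          refine hinj c hc c' hc' (Fin.ext (Nat.xor_left_injective (x := 2 ^ T) ?_))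
          simpa [xorIdx, (mem_filter.mp hc).2, (mem_filter.mp hc').2, Fin.ext_iff] using h
        · intro c hc c' hc' h
          exact hinj c hc c' hc' (Prod.ext_iff.mp h).2
    _ = #(top.image (fun c => (t, c.2)) ∪ top.image fun c => (t, xorIdx c.1 c.2)) := by
        refine (card_union_of_disjoint (disjoint_left.mpr ?_)).symm
        simp only [mem_image, not_exists, not_and]
        rintro _ ⟨c, hc, rfl⟩ c' hc' h
        have hb := (hbits c hc).1
        have hb' := (hbits c' hc').1
        have hval : (c.2 : ℕ) = c'.2 ^^^ 2 ^ T := by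
          simpa [xorIdx, (mem_filter.mp hc').2] using congrArg (fun x => (x.2 : ℕ)) h.symm
        simp [hval, Nat.testBit_xor, hb'] at hb
    _ ≤ #below := card_le_card (union_subset
        (image_subset_iff.mpr fun c hc => (hbits c hc).2.1)
        (image_subset_iff.mpr fun c hc => (hbits c hc).2.2))

lemma three_mul_card_stage_eq_le (hw : w.IsCycle) (hT : ∀ c ∈ checksOn w, (c.1 : ℕ) ≤ T)
    {t : Fin n} (ht : (t : ℕ) + 1 = T) :
    3 * #{c ∈ checksOn w | (c.1 : ℕ) = T} ≤ #(checksOn w) := by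
  have hdisj : Disjoint {c ∈ checksOn w | (c.1 : ℕ) = T} {c ∈ checksOn w | c.1 = t} :=
    disjoint_filter.mpr fun c _ hcT hct => by omega
  have := card_le_card (union_subset (filter_subset _ _) (filter_subset _ _) :
    {c ∈ checksOn w | (c.1 : ℕ) = T} ∪ {c ∈ checksOn w | c.1 = t} ⊆ checksOn w)
  rw [card_union_of_disjoint hdisj] at this
  have := two_mul_card_stage_eq_le hw hT ht
  omega

end TopStage

theorem twelve_le_length_of_isCycle (hw : w.IsCycle) : 12 ≤ w.length := by
  have hlen := two_mul_card_checksOn hw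
  have hne : (checksOn w).Nonempty := card_pos.mp (by have := hw.three_le_length; omega)
  obtain ⟨c, hc, hmax⟩ := exists_max_image (checksOn w) (fun c => (c.1 : ℕ)) hne
  obtain ⟨-, hp, -⟩ := testBit_eq_false_and_mem_of_stage_eq hw hmax (mem_checksOn.mp hc) rfl
  obtain ⟨c₀, -, hc₀, -⟩ := exists_mem_checksOn_stage_add_one_eq hw hmax hp rfl
  obtain ⟨c', hc', hne', hc'T⟩ := exists_ne_mem_checksOn_stage_eq hw hmax hc rfl
  have htop : 1 < #{c' ∈ checksOn w | (c'.1 : ℕ) = c.1} :=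
    one_lt_card.mpr ⟨c', mem_filter.mpr ⟨hc', hc'T⟩, c, mem_filter.mpr ⟨hc, rfl⟩, hne'⟩
  have := three_mul_card_stage_eq_le hw hmax hc₀
  omega

def tannerHom {m n : ℕ} (h : m ≤ n) : tanner m →g tanner n where
  toFun := Sum.map (Prod.map (Fin.castLE (by omega)) (Fin.castLE (Nat.pow_le_pow_right two_pos h)))
    (Prod.map (Fin.castLE h) (Fin.castLE (Nat.pow_le_pow_right two_pos h)))
  map_rel' := by
    rintro (p | c) (p' | c') hadj
    · exact hadj.elim
    · exact varCheckAdj_iff.mpr (by simpa using varCheckAdj_iff.mp hadj)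
    · exact varCheckAdj_iff.mpr (by simpa using varCheckAdj_iff.mp hadj)
    · exact hadj.elim

lemma tannerHom_injective {m n : ℕ} (h : m ≤ n) : Function.Injective (tannerHom h) :=
  ((Fin.castLE_injective _).prodMap (Fin.castLE_injective _)).sumMap
    ((Fin.castLE_injective _).prodMap (Fin.castLE_injective _))

instance (p : PVar n) (c : PChk n) : Decidable (varCheckAdj n p c) :=
  inferInstanceAs (Decidable (_ ∨ _ ∨ _))

instance : DecidableRel (tanner n).Adj
  | inl _, inl _ => isFalse id
  | inl p, inr c => inferInstanceAs (Decidable (varCheckAdj n p c))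
  | inr c, inl p => inferInstanceAs (Decidable (varCheckAdj n p c))
  | inr _, inr _ => isFalse id

def tannerTwoCycle : (tanner 2).Walk (inl (1, 0)) (inl (1, 0)) :=
  .cons (v := inr (0, 0)) (by decide) <| .cons (v := inl (0, 1)) (by decide) <|
  .cons (v := inr (0, 1)) (by decide) <| .cons (v := inl (1, 1)) (by decide) <|
  .cons (v := inr (1, 1)) (by decide) <| .cons (v := inl (1, 3)) (by decide) <|
  .cons (v := inr (0, 3)) (by decide) <| .cons (v := inl (0, 3)) (by decide) <|
  .cons (v := inr (0, 2)) (by decide) <| .cons (v := inl (1, 2)) (by decide) <|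
  .cons (v := inr (1, 0)) (by decide) <| .cons (by decide) .nil

lemma tannerTwoCycle_isCycle : tannerTwoCycle.IsCycle :=
  (cons_isCycle_iff _ _).mpr ⟨IsPath.mk' (by decide), by decide⟩

lemma not_isAcyclic_tanner (h : 2 ≤ n) : ¬(tanner n).IsAcyclic := fun hacyc =>
  hacyc.comap (tannerHom h) (tannerHom_injective h) _ tannerTwoCycle_isCycle

end Tanner

theorem polar_girth (n : ℕ) (hn : 3 ≤ n) : 12 ≤ (tanner n).girth := by
  obtain ⟨a, w, hw, hg⟩ := exists_girth_eq_length.mpr (not_isAcyclic_tanner (by omega : 2 ≤ n))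
  exact hg ▸ twelve_le_length_of_isCycle hw
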